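/- arXiv:1710.09396 — 4 statements merged into one kernel-verified Lean document; each statement's English description precedes it below -/
import Mathlib

section
/- Let A be a unital C*-algebra represented on a Hilbert space K with 1_K ∈ A, let H be a group, and let u : H → U(K) be a map with u(1) = 1_K such that u(h)·A = A·u(h) for all h ∈ H. Then the set ∑_{h∈H} A·u(h) ⊆ B(K) is a weakly H-graded *-algebra (i.e., A·u(h₁)·A·u(h₂) ⊆ A·u(h₁h₂) and (A·u(h))* = A·u(h⁻¹)) if and only if for all h₁, h₂ ∈ H the element δu(h₁,h₂) := u(h₁)u(h₂)u(h₁h₂)* lies in A. -/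
open scoped Pointwise

/-- Lemma `alg_vs_delta`: the sum `∑ₕ A·u(h)` is a weakly `H`-graded *-algebra iff all the
elements `δu(h₁,h₂) = u(h₁)u(h₂)u(h₁h₂)*` lie in `A`. -/
theorem stmt0 {K : Type*} [NormedAddCommGroup K] [InnerProductSpace ℂ K] [CompleteSpace K]
    (A : StarSubalgebra ℂ (K →L[ℂ] K)) (hA : IsClosed (A : Set (K →L[ℂ] K)))
    {H : Type*} [Group H] (u : H → (K →L[ℂ] K))
    (hu : ∀ h, u h ∈ unitary (K →L[ℂ] K)) (hu1 : u 1 = 1)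
    (hcomm : ∀ h, (fun a => a * u h) '' (A : Set (K →L[ℂ] K))
      = (fun a => u h * a) '' (A : Set (K →L[ℂ] K))) :
    ((∀ h₁ h₂ : H,
        ((fun a => a * u h₁) '' (A : Set (K →L[ℂ] K)))
          * ((fun a => a * u h₂) '' (A : Set (K →L[ℂ] K)))
          ⊆ (fun a => a * u (h₁ * h₂)) '' (A : Set (K →L[ℂ] K))) ∧
      (∀ h : H, star '' ((fun a => a * u h) '' (A : Set (K →L[ℂ] K)))
          = (fun a => a * u h⁻¹) '' (A : Set (K →L[ℂ] K))))
    ↔ (∀ h₁ h₂ : H, u h₁ * u h₂ * star (u (h₁ * h₂)) ∈ A) := by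
  -- helper: move elements of A from right of `u h` to the left
  have swap : ∀ h : H, ∀ b ∈ A, ∃ c ∈ A, u h * b = c * u h := by
    intro h b hb
    have : u h * b ∈ (fun a => a * u h) '' (A : Set (K →L[ℂ] K)) := by
      rw [hcomm]; exact ⟨b, hb, rfl⟩
    obtain ⟨c, hc, hce⟩ := this
    exact ⟨c, hc, hce.symm⟩
  -- helper: move elements of A from right of `star (u h)` to the left
  have swap' : ∀ h : H, ∀ b ∈ A, ∃ c ∈ A, star (u h) * b = c * star (u h) := by
    intro h b hb
    have hmem : b * u h ∈ (fun a => u h * a) '' (A : Set (K →L[ℂ] K)) := by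
      rw [← hcomm]; exact ⟨b, hb, rfl⟩
    obtain ⟨c, hc, hce⟩ := hmem
    refine ⟨c, hc, ?_⟩
    calc star (u h) * b
        = star (u h) * (b * u h) * star (u h) := by
          rw [← mul_assoc, mul_assoc (star (u h) * b), (hu h).2, mul_one]
      _ = star (u h) * (u h * c) * star (u h) := by rw [← hce]
      _ = c * star (u h) := by rw [← mul_assoc, (hu h).1, one_mul]
  constructor
  · rintro ⟨hmul, -⟩ h₁ h₂
    have h1 : u h₁ ∈ (fun a => a * u h₁) '' (A : Set (K →L[ℂ] K)) :=
      ⟨1, A.one_mem, one_mul _⟩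
    have h2 : u h₂ ∈ (fun a => a * u h₂) '' (A : Set (K →L[ℂ] K)) :=
      ⟨1, A.one_mem, one_mul _⟩
    have : u h₁ * u h₂ ∈ (fun a => a * u (h₁ * h₂)) '' (A : Set (K →L[ℂ] K)) :=
      hmul h₁ h₂ (Set.mul_mem_mul h1 h2)
    obtain ⟨a, ha, hae⟩ := this
    have : u h₁ * u h₂ * star (u (h₁ * h₂)) = a := by
      rw [← hae]; rw [mul_assoc, (hu (h₁ * h₂)).2, mul_one]
    rw [this]; exact ha
  · intro hδ
    -- key: star of an element of A·u h lies in A·u h⁻¹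
    have key : ∀ h : H, ∀ a ∈ A, ∃ b ∈ A, star (a * u h) = b * u h⁻¹ := by
      intro h a ha
      obtain ⟨c, hc, hce⟩ := swap' h (star a) (star_mem ha)
      have hd : u h * u h⁻¹ ∈ A := by simpa [hu1] using hδ h h⁻¹
      have hstar : star (u h) = u h⁻¹ * star (u h * u h⁻¹) := by
        rw [star_mul, ← mul_assoc, (hu h⁻¹).2, one_mul]
      obtain ⟨e, he, hee⟩ := swap h⁻¹ (star (u h * u h⁻¹)) (star_mem hd)
      refine ⟨c * e, A.mul_mem hc he, ?_⟩
      rw [star_mul, hce, hstar, hee, ← mul_assoc]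
    refine ⟨?_, ?_⟩
    · intro h₁ h₂ x hx
      rw [Set.mem_mul] at hx
      obtain ⟨x₁, hx₁, x₂, hx₂, rfl⟩ := hx
      obtain ⟨a, ha, rfl⟩ := hx₁
      obtain ⟨b, hb, rfl⟩ := hx₂
      obtain ⟨c, hc, hce⟩ := swap h₁ b hb
      refine ⟨a * c * (u h₁ * u h₂ * star (u (h₁ * h₂))),
        A.mul_mem (A.mul_mem ha hc) (hδ h₁ h₂), ?_⟩
      show a * c * (u h₁ * u h₂ * star (u (h₁ * h₂))) * u (h₁ * h₂)
          = a * u h₁ * (b * u h₂)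
      rw [mul_assoc (a * c), mul_assoc (u h₁ * u h₂), (hu (h₁ * h₂)).1, mul_one]
      calc a * c * (u h₁ * u h₂) = a * (c * u h₁) * u h₂ := by
            rw [mul_assoc, ← mul_assoc c, mul_assoc a]
        _ = a * (u h₁ * b) * u h₂ := by rw [← hce]
        _ = a * u h₁ * (b * u h₂) := by rw [← mul_assoc, mul_assoc (a * u h₁)]
    · intro h
      ext x
      constructor
      · rintro ⟨y, ⟨a, ha, rfl⟩, rfl⟩
        obtain ⟨b, hb, hbe⟩ := key h a ha
        exact ⟨b, hb, hbe.symm⟩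
      · rintro ⟨a, ha, rfl⟩
        obtain ⟨b, hb, hbe⟩ := key h⁻¹ a ha
        rw [inv_inv] at hbe
        refine ⟨b * u h, ⟨b, hb, rfl⟩, ?_⟩
        rw [← hbe, star_star]
end

section
/- Let A₁ ⊆ B(K) be an irreducible representation of a simple C*-algebra with 1_K ∈ A₁, let H be a group, and let u : H → U(K) with u(1) = 1_K satisfy: (1) u(h)·A₁ = A₁·u(h) for all h; (2) u(h₁)u(h₂)u(h₁h₂)* ∈ A₁ for all h₁,h₂; (3) for every h ≠ 1 the automorphism Ad[u(h)] restricted to A₁ is not inner. Then the sum of subspaces ∑_{h∈H} A₁·u(h) ⊆ B(K) is direct. -/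
/-!
Take a relation `∑ x_h u(h) = 0` with coefficients in `A₁` and argue by induction on its support.
Right multiplication by `u(h₀)*`, using that `δu` takes values in `A₁`, moves any coefficient to
position `1`. The coefficients at `1` of the relations with a given support form a two-sided ideal
of `A₁`, which is `0` or everything because a Banach algebra without nontrivial closed ideals has
no nontrivial ideals. In the second case there is a relation with coefficient `1` at `1`; commuting it with
`a ∈ A₁` kills that coefficient, so by induction every other coefficient `Z` satisfies
`a Z = Z Ad[u g](a)`. Then `Z* Z` and `Z Z*` commute with `A₁`, hence are scalars by
irreducibility, and a nonzero `Z` would be a multiple of a unitary of `A₁` implementing `Ad[u g]`,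
which (3) excludes.
-/

section Conjugation

variable {R : Type*} [Monoid R] [StarMul R] {U : R} {s : Set R}

lemma mul_mul_star_mem_of_image_eq (hU : U ∈ unitary R)
    (h : (fun a => a * U) '' s = (fun a => U * a) '' s) {b : R} (hb : b ∈ s) :
    U * b * star U ∈ s := by
  obtain ⟨a, ha, hab⟩ : U * b ∈ (fun a => a * U) '' s := h ▸ ⟨b, hb, rfl⟩
  rwa [← hab, mul_assoc, Unitary.mul_star_self_of_mem hU, mul_one]

lemma star_mul_mul_mem_of_image_eq (hU : U ∈ unitary R)
    (h : (fun a => a * U) '' s = (fun a => U * a) '' s) {b : R} (hb : b ∈ s) :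
    star U * b * U ∈ s := by
  obtain ⟨a, ha, hab⟩ : b * U ∈ (fun a => U * a) '' s := h ▸ ⟨b, hb, rfl⟩
  rwa [mul_assoc, ← hab, ← mul_assoc, Unitary.star_mul_self_of_mem hU, one_mul]

end Conjugation

namespace TwoSidedIdeal

variable {R : Type*}

def closure [Ring R] [TopologicalSpace R] [IsTopologicalRing R] (I : TwoSidedIdeal R) :
    TwoSidedIdeal R :=
  .mk' (_root_.closure (I : Set R)) (subset_closure I.zero_mem)
    (fun hx hy => map_mem_closure₂ continuous_add hx hy fun _ ha _ hb => I.add_mem ha hb)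
    (fun hx => map_mem_closure continuous_neg hx fun _ ha => I.neg_mem ha)
    (fun {x _} hy =>
      map_mem_closure (continuous_const_mul x) hy fun _ hb => I.mul_mem_left x _ hb)
    (fun {_ y} hx =>
      map_mem_closure (f := (· * y)) (continuous_mul_const y) hx fun a ha => I.mul_mem_right a y ha)

lemma coe_closure [Ring R] [TopologicalSpace R] [IsTopologicalRing R] (I : TwoSidedIdeal R) :
    (I.closure : Set R) = _root_.closure I :=
  coe_mk' (R := R) _ _ _ _ _ _

theorem eq_bot_or_eq_top_of_forall_isClosed [NormedRing R] [HasSummableGeomSeries R]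
    (h : ∀ I : TwoSidedIdeal R, IsClosed (I : Set R) → I = ⊥ ∨ I = ⊤) (I : TwoSidedIdeal R) :
    I = ⊥ ∨ I = ⊤ := by
  refine (h I.closure (I.coe_closure ▸ isClosed_closure)).imp (fun hbot => ?_) (fun htop => ?_)
  · exact eq_bot_iff.2 (hbot ▸ fun x hx => (I.coe_closure ▸ subset_closure hx :))
  · have h1 : (1 : R) ∈ _root_.closure (I : Set R) := I.coe_closure ▸ htop ▸ mem_top R
    obtain ⟨x, hxI, hx⟩ := Metric.mem_closure_iff.1 h1 1 one_pos
    rw [dist_eq_norm] at hx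
    exact I.one_mem_iff.1 (mem_asIdeal.1 <|
      (I.asIdeal.eq_top_of_norm_lt_one (mem_asIdeal.2 hxI) hx).symm ▸ Submodule.mem_top)

end TwoSidedIdeal

section Relations

variable {R : Type*} [Ring R] {S : Type*} [SetLike S R] (A : S)
  {H : Type*} (u : H → R)

def IsRelation (t : Finset H) (z : H → R) : Prop :=
  (∀ g ∈ t, z g ∈ A) ∧ ∑ g ∈ t, z g * u g = 0

namespace IsRelation

variable {A u} {t : Finset H} {z w : H → R}

lemma erase [DecidableEq H] (hz : IsRelation A u t z) {g : H} (hg : z g = 0) :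
    IsRelation A u (t.erase g) z :=
  ⟨fun h hh => hz.1 h (Finset.mem_of_mem_erase hh),
    by rw [Finset.sum_erase _ (by rw [hg, zero_mul]), hz.2]⟩

variable [SubringClass S R]

lemma zero : IsRelation A u t 0 :=
  ⟨fun _ _ => zero_mem A, by simp⟩

lemma add (hz : IsRelation A u t z) (hw : IsRelation A u t w) : IsRelation A u t (z + w) :=
  ⟨fun g hg => add_mem (hz.1 g hg) (hw.1 g hg), by
    simp only [Pi.add_apply, add_mul, Finset.sum_add_distrib, hz.2, hw.2, add_zero]⟩

lemma neg (hz : IsRelation A u t z) : IsRelation A u t (-z) :=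
  ⟨fun g hg => neg_mem (hz.1 g hg), by
    simp only [Pi.neg_apply, neg_mul, Finset.sum_neg_distrib, hz.2, neg_zero]⟩

lemma mul_left (hz : IsRelation A u t z) {c : R} (hc : c ∈ A) :
    IsRelation A u t (fun g => c * z g) :=
  ⟨fun g hg => mul_mem hc (hz.1 g hg), by simp only [mul_assoc, ← Finset.mul_sum, hz.2, mul_zero]⟩

variable [StarMul R]

lemma mul_conj (hu : ∀ g, u g ∈ unitary R) (hconj : ∀ g, ∀ a ∈ A, u g * a * star (u g) ∈ A)
    (hz : IsRelation A u t z) {c : R} (hc : c ∈ A) :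
    IsRelation A u t (fun g => z g * (u g * c * star (u g))) := by
  refine ⟨fun g hg => mul_mem (hz.1 g hg) (hconj g c hc), ?_⟩
  have hterm : ∀ g, z g * (u g * c * star (u g)) * u g = z g * u g * c := fun g => by
    simp only [mul_assoc, Unitary.star_mul_self_of_mem (hu g), mul_one]
  simp only [hterm, ← Finset.sum_mul, hz.2, zero_mul]

variable [Group H]

lemma intertwines [DecidableEq H] (hu : ∀ g, u g ∈ unitary R) (hu1 : u 1 = 1)
    (hconj : ∀ g, ∀ a ∈ A, u g * a * star (u g) ∈ A)
    (hvan : ∀ z, IsRelation A u (t.erase 1) z → ∀ g ∈ t.erase 1, z g = 0)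
    (hw : IsRelation A u t w) (hw1 : w 1 = 1) {a : R} (ha : a ∈ A) :
    ∀ g ∈ t.erase 1, a * w g = w g * (u g * a * star (u g)) := by
  have hcomm := ((hw.mul_left ha).add (hw.mul_conj hu hconj ha).neg).erase
    (g := 1) (by simp [hw1, hu1])
  intro g hg
  simpa [← sub_eq_add_neg, sub_eq_zero] using hvan _ hcomm g hg

variable [StarMemClass S R]

/-- Multiplying on the right by `star (u h₀)`: `u h * star (u h₀) = star (δ g h₀) * u g` for
`g = h * h₀⁻¹`, where `δ g h = u g * u h * star (u (g * h))`. -/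
lemma translate (hu : ∀ g, u g ∈ unitary R)
    (hdelta : ∀ g h, u g * u h * star (u (g * h)) ∈ A) (hz : IsRelation A u t z) (h₀ : H) :
    IsRelation A u (t.map (Equiv.mulRight h₀⁻¹).toEmbedding)
      (fun g => z (g * h₀) * star (u g * u h₀ * star (u (g * h₀)))) := by
  refine ⟨?_, ?_⟩
  · simp only [Finset.forall_mem_map]
    exact fun h hh => mul_mem (hz.1 _ (by simpa using hh)) (star_mem (hdelta _ h₀))
  · have hterm : ∀ h, z (h * h₀⁻¹ * h₀) * star (u (h * h₀⁻¹) * u h₀ * star (u (h * h₀⁻¹ * h₀)))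
        * u (h * h₀⁻¹) = z h * u h * star (u h₀) := fun h => by
      rw [inv_mul_cancel_right]
      simp only [star_mul, star_star, mul_assoc,
        Unitary.star_mul_self_of_mem (hu _), mul_one]
    simp only [Finset.sum_map, Equiv.coe_toEmbedding, Equiv.coe_mulRight, hterm,
      ← Finset.sum_mul, hz.2, zero_mul]

end IsRelation

variable [SubringClass S R] [StarMul R] [Group H]

def leadingCoeffIdeal (hu : ∀ g, u g ∈ unitary R) (hu1 : u 1 = 1)
    (hconj : ∀ g, ∀ a ∈ A, u g * a * star (u g) ∈ A) (t : Finset H) : TwoSidedIdeal A :=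
  .mk' {a : A | ∃ z, IsRelation A u t z ∧ z 1 = a} ⟨0, .zero, rfl⟩
    (fun ⟨z, hz, hz1⟩ ⟨w, hw, hw1⟩ => ⟨z + w, hz.add hw, by simp [hz1, hw1]⟩)
    (fun ⟨z, hz, hz1⟩ => ⟨-z, hz.neg, by simp [hz1]⟩)
    (fun {c _} ⟨z, hz, hz1⟩ => ⟨fun g => c * z g, hz.mul_left c.2, by simp [hz1]⟩)
    (fun {_ c} ⟨z, hz, hz1⟩ =>
      ⟨fun g => z g * (u g * c * star (u g)), hz.mul_conj hu hconj c.2, by simp [hz1, hu1]⟩)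

lemma mem_leadingCoeffIdeal (hu : ∀ g, u g ∈ unitary R) (hu1 : u 1 = 1)
    (hconj : ∀ g, ∀ a ∈ A, u g * a * star (u g) ∈ A) (t : Finset H) (a : A) :
    a ∈ leadingCoeffIdeal A u hu hu1 hconj t ↔ ∃ z, IsRelation A u t z ∧ z 1 = a :=
  TwoSidedIdeal.mem_mk' ..

lemma leadingCoeff_eq_zero [DecidableEq H] (hu : ∀ g, u g ∈ unitary R) (hu1 : u 1 = 1)
    (hconj : ∀ g, ∀ a ∈ A, u g * a * star (u g) ∈ A)
    (hsimple : ∀ I : TwoSidedIdeal A, I = ⊥ ∨ I = ⊤)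
    (hfree : ∀ g ≠ 1, ∀ Z ∈ A, (∀ a ∈ A, a * Z = Z * (u g * a * star (u g))) → Z = 0)
    {t : Finset H} (ht : 1 ∈ t)
    (hvan : ∀ z, IsRelation A u (t.erase 1) z → ∀ g ∈ t.erase 1, z g = 0)
    {z : H → R} (hz : IsRelation A u t z) : z 1 = 0 := by
  rcases hsimple (leadingCoeffIdeal A u hu hu1 hconj t) with hbot | htop
  · have hmem := (mem_leadingCoeffIdeal A u hu hu1 hconj t ⟨z 1, hz.1 1 ht⟩).2 ⟨z, hz, rfl⟩
    rw [hbot, TwoSidedIdeal.mem_bot] at hmem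
    exact congrArg Subtype.val hmem
  -- Then some `w` has `w 1 = 1`; its other coefficients are intertwiners, hence `0`, so `1 = 0`.
  · obtain ⟨w, hw, hw1⟩ := (mem_leadingCoeffIdeal A u hu hu1 hconj t 1).1
      (htop ▸ TwoSidedIdeal.mem_top A)
    have hw1 : w 1 = 1 := hw1
    have hzero : ∀ g ∈ t.erase 1, w g = 0 := fun g hg =>
      hfree g (Finset.ne_of_mem_erase hg) (w g) (hw.1 g (Finset.mem_of_mem_erase hg))
        fun a ha => hw.intertwines hu hu1 hconj hvan hw1 ha g hg
    have h10 : (1 : R) = 0 := by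
      rw [← hw.2, ← Finset.add_sum_erase t _ ht,
        Finset.sum_eq_zero fun g hg => by rw [hzero g hg, zero_mul], hw1, hu1, one_mul, add_zero]
    rw [← mul_one (z 1), h10, mul_zero]

variable [StarMemClass S R]

theorem IsRelation.eq_zero (hu : ∀ g, u g ∈ unitary R) (hu1 : u 1 = 1)
    (hconj : ∀ g, ∀ a ∈ A, u g * a * star (u g) ∈ A)
    (hdelta : ∀ g h, u g * u h * star (u (g * h)) ∈ A)
    (hsimple : ∀ I : TwoSidedIdeal A, I = ⊥ ∨ I = ⊤)
    (hfree : ∀ g ≠ 1, ∀ Z ∈ A, (∀ a ∈ A, a * Z = Z * (u g * a * star (u g))) → Z = 0)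
    {s : Finset H} {z : H → R} (hz : IsRelation A u s z) : ∀ h ∈ s, z h = 0 := by
  classical
  induction hn : s.card using Nat.strong_induction_on generalizing s z with
  | _ n IH =>
  intro h₀ hh₀
  set t := s.map (Equiv.mulRight h₀⁻¹).toEmbedding
  have ht : 1 ∈ t := Finset.mem_map.2 ⟨h₀, hh₀, by simp⟩
  have hcard : (t.erase 1).card < n :=
    hn ▸ Finset.card_map (s := s) _ ▸ Finset.card_erase_lt_of_mem ht
  have h := leadingCoeff_eq_zero A u hu hu1 hconj hsimple hfree ht
    (fun y hy => IH _ hcard hy rfl) (hz.translate hu hdelta h₀)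
  simpa [hu1, Unitary.mul_star_self_of_mem (hu h₀)] using h

end Relations

section Intertwiner

variable {R : Type*} [Monoid R] [StarMul R] {S : Type*} [SetLike S R] [StarMemClass S R]
  {A : S} {U Z : R}

lemma star_intertwines (hint : ∀ a ∈ A, a * Z = Z * (U * a * star U)) {a : R} (ha : a ∈ A) :
    U * a * star U * star Z = star Z * a := by
  simpa [mul_assoc] using congrArg star (hint (star a) (star_mem ha)).symm

lemma star_mul_self_commute_of_intertwines (hU : U ∈ unitary R)
    (hUA : ∀ a ∈ A, star U * a * U ∈ A) (hint : ∀ a ∈ A, a * Z = Z * (U * a * star U))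
    {a : R} (ha : a ∈ A) : star Z * Z * a = a * (star Z * Z) := by
  have hconj : U * (star U * a * U) * star U = a := by
    simp only [mul_assoc, Unitary.mul_star_self_of_mem hU, mul_one, ← mul_assoc U,
      one_mul]
  calc star Z * Z * a = star Z * (Z * (U * (star U * a * U) * star U)) := by rw [hconj, mul_assoc]
    _ = star Z * (star U * a * U) * Z := by rw [← hint _ (hUA a ha), ← mul_assoc]
    _ = a * (star Z * Z) := by rw [← star_intertwines hint (hUA a ha), hconj, mul_assoc]

lemma mul_star_self_commute_of_intertwines (hint : ∀ a ∈ A, a * Z = Z * (U * a * star U))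
    {a : R} (ha : a ∈ A) : Z * star Z * a = a * (Z * star Z) := by
  calc Z * star Z * a = Z * (U * a * star U) * star Z := by
        rw [mul_assoc, ← star_intertwines hint ha]; simp only [mul_assoc]
    _ = a * (Z * star Z) := by rw [← hint a ha, mul_assoc]

end Intertwiner

section BoundedOperators

variable {K : Type*} [NormedAddCommGroup K] [InnerProductSpace ℂ K] [CompleteSpace K]

lemma norm_apply_sq_of_star_mul_self_eq {Z : K →L[ℂ] K} {c : ℂ} (hc : star Z * Z = c • 1)
    (ξ : K) : (‖Z ξ‖ ^ 2 : ℂ) = c * ‖ξ‖ ^ 2 := by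
  calc (‖Z ξ‖ ^ 2 : ℂ) = inner ℂ (Z ξ) (Z ξ) := (inner_self_eq_norm_sq_to_K (𝕜 := ℂ) (Z ξ)).symm
    _ = inner ℂ ξ ((star Z * Z) ξ) := by
        rw [ContinuousLinearMap.star_eq_adjoint]
        exact (ContinuousLinearMap.adjoint_inner_right Z ξ (Z ξ)).symm
    _ = c * ‖ξ‖ ^ 2 := by
        simp [hc, inner_self_eq_norm_sq_to_K]

lemma exists_smul_mem_unitary {Z : K →L[ℂ] K} (hZ : Z ≠ 0) {c c' : ℂ}
    (hc : star Z * Z = c • 1) (hc' : Z * star Z = c' • 1) :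
    ∃ γ : ℂ, γ • Z ∈ unitary (K →L[ℂ] K) := by
  have hcc' : c' = c := smul_left_injective ℂ hZ <| by
    calc c' • Z = Z * star Z * Z := by rw [hc', smul_mul_assoc, one_mul]
      _ = c • Z := by rw [mul_assoc, hc, mul_smul_comm, mul_one]
  obtain ⟨ξ, hξ⟩ : ∃ ξ, Z ξ ≠ 0 := by
    by_contra! h
    exact hZ (ContinuousLinearMap.ext h)
  have hξ0 : ‖ξ‖ ≠ 0 := norm_ne_zero_iff.2 fun h => hξ (by rw [h, map_zero])
  have hγ : ((‖ξ‖ / ‖Z ξ‖ : ℝ) : ℂ) * (‖ξ‖ / ‖Z ξ‖ : ℝ) * c = 1 := by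
    have := norm_apply_sq_of_star_mul_self_eq hc ξ
    have hZξ : (‖Z ξ‖ : ℂ) ≠ 0 := by exact_mod_cast norm_ne_zero_iff.2 hξ
    push_cast
    field_simp
    linear_combination -this
  refine ⟨(‖ξ‖ / ‖Z ξ‖ : ℝ), Unitary.mem_iff.2 ⟨?_, ?_⟩⟩
  · rw [star_smul, Complex.star_def, Complex.conj_ofReal, smul_mul_smul_comm, hc, smul_smul, hγ,
      one_smul]
  · rw [star_smul, Complex.star_def, Complex.conj_ofReal, smul_mul_smul_comm, hc', hcc', smul_smul,
      hγ, one_smul]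

theorem exists_unitary_conj_eq_of_intertwines {A : StarSubalgebra ℂ (K →L[ℂ] K)}
    (hirr : ∀ T : K →L[ℂ] K, (∀ a ∈ A, T * a = a * T) → ∃ c : ℂ, T = c • 1)
    {U : K →L[ℂ] K} (hU : U ∈ unitary (K →L[ℂ] K)) (hUA : ∀ a ∈ A, star U * a * U ∈ A)
    {Z : K →L[ℂ] K} (hZA : Z ∈ A) (hZ : Z ≠ 0) (hint : ∀ a ∈ A, a * Z = Z * (U * a * star U)) :
    ∃ v ∈ A, v ∈ unitary (K →L[ℂ] K) ∧ ∀ a ∈ A, U * a * star U = v * a * star v := by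
  obtain ⟨c, hc⟩ := hirr _ fun a => star_mul_self_commute_of_intertwines hU hUA hint
  obtain ⟨c', hc'⟩ := hirr _ fun a => mul_star_self_commute_of_intertwines hint
  obtain ⟨γ, hγ⟩ := exists_smul_mem_unitary hZ hc hc'
  refine ⟨star (γ • Z), star_mem (A.smul_mem hZA γ), Unitary.star_mem hγ, fun a ha => ?_⟩
  calc U * a * star U = star (γ • Z) * (γ • Z * (U * a * star U)) := by
        rw [← mul_assoc, Unitary.star_mul_self_of_mem hγ, one_mul]
    _ = star (γ • Z) * a * star (star (γ • Z)) := by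
        rw [smul_mul_assoc, ← hint a ha, ← mul_smul_comm, star_star, mul_assoc]

end BoundedOperators

/-- Lemma `lem:sum direct`: if `A₁ ⊆ B(K)` is an irreducible representation of a simple
C*-algebra, `u : H → U(K)` normalizes `A₁`, has `δu(h₁,h₂) ∈ A₁`, and `Ad[u(h)]|_{A₁}` is
non-inner for `h ≠ 1`, then the sum `∑ₕ A₁·u(h)` is direct. -/
theorem stmt1 {K : Type*} [NormedAddCommGroup K] [InnerProductSpace ℂ K] [CompleteSpace K]
    (A : StarSubalgebra ℂ (K →L[ℂ] K)) (hA : IsClosed (A : Set (K →L[ℂ] K)))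
    (hirr : ∀ T : K →L[ℂ] K, (∀ a ∈ A, T * a = a * T) → ∃ c : ℂ, T = c • 1)
    (hsimple : ∀ I : TwoSidedIdeal A, IsClosed (I : Set A) → I = ⊥ ∨ I = ⊤)
    {H : Type*} [Group H] (u : H → (K →L[ℂ] K))
    (hu : ∀ h, u h ∈ unitary (K →L[ℂ] K)) (hu1 : u 1 = 1)
    (hcomm : ∀ h, (fun a => a * u h) '' (A : Set (K →L[ℂ] K))
      = (fun a => u h * a) '' (A : Set (K →L[ℂ] K)))
    (hdelta : ∀ h₁ h₂ : H, u h₁ * u h₂ * star (u (h₁ * h₂)) ∈ A)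
    (hnotinner : ∀ h : H, h ≠ 1 →
      ¬ ∃ v : K →L[ℂ] K, v ∈ A ∧ v ∈ unitary (K →L[ℂ] K) ∧
        ∀ a ∈ A, u h * a * star (u h) = v * a * star v) :
    ∀ (s : Finset H) (x : H → (K →L[ℂ] K)), (∀ h ∈ s, x h ∈ A) →
      ∑ h ∈ s, x h * u h = 0 → ∀ h ∈ s, x h = 0 := by
  intro s x hxA hsum
  have : CompleteSpace A := hA.completeSpace_coe
  have hfree : ∀ g ≠ 1, ∀ Z ∈ A, (∀ a ∈ A, a * Z = Z * (u g * a * star (u g))) → Z = 0 :=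
    fun g hg Z hZA hint => by_contra fun hZ => hnotinner g hg <|
      exists_unitary_conj_eq_of_intertwines hirr (hu g)
        (fun _ => star_mul_mul_mem_of_image_eq (hu g) (hcomm g)) hZA hZ hint
  exact IsRelation.eq_zero A u hu hu1 (fun g _ => mul_mul_star_mem_of_image_eq (hu g) (hcomm g))
    hdelta (TwoSidedIdeal.eq_bot_or_eq_top_of_forall_isClosed hsimple) hfree ⟨hxA, hsum⟩
end

section
/- For a unital C*-algebra A, the map sending a *-automorphism α to the class [M_α] of the associated self-equivalence bimodule is a group homomorphism Aut(A) → Pic(A) whose kernel is exactly the group of inner automorphisms Inn(A). Consequently Out(A) = Aut(A)/Inn(A) embeds as a subgroup of the Picard group Pic(A). -/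
/-- The map `α ↦ [M_α]` from `Aut(A)` to the Picard group `Pic(A)` is a group homomorphism
with kernel `Inn(A)`; equivalently, the bimodules `M_α` and `M_β` are isomorphic (as bimodules
with inner products) if and only if `β` differs from `α` by an inner automorphism, so that
`Out(A) = Aut(A)/Inn(A)` embeds into `Pic(A)`. -/
theorem stmt4 {A : Type*} [NormedRing A] [StarRing A] [CStarRing A] [CompleteSpace A]
    [NormedAlgebra ℂ A] [StarModule ℂ A] (α β : A ≃⋆ₐ[ℂ] A) :
    (∃ Φ : A ≃ₗ[ℂ] A,
        (∀ a x : A, Φ (a * x) = a * Φ x) ∧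
        (∀ (x : A) (a : A), Φ (x * α a) = Φ x * β a) ∧
        (∀ x y : A, Φ x * star (Φ y) = x * star y))
      ↔ ∃ u ∈ unitary A, ∀ a : A, β a = u * α a * star u := by
  constructor
  · rintro ⟨Φ, h1, h2, h3⟩
    set u := Φ 1 with hu
    have hx : ∀ x : A, Φ x = x * u := fun x => by
      have := h1 x 1; simpa using this
    have huu : u * star u = 1 := by
      have := h3 1 1; simpa [hx] using this
    obtain ⟨x, hxu⟩ := Φ.surjective 1
    rw [hx] at hxu
    have hsu : star u = x := by
      calc star u = (x * u) * star u := by rw [hxu, one_mul]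
        _ = x * (u * star u) := by rw [mul_assoc]
        _ = x := by rw [huu, mul_one]
    have hsuu : star u * u = 1 := by rw [hsu, hxu]
    refine ⟨star u, ?_, ?_⟩
    · exact Unitary.mem_iff.mpr ⟨by rwa [star_star], by rwa [star_star]⟩
    · intro a
      have h := h2 1 a
      rw [one_mul, hx, hx, one_mul] at h
      calc β a = star u * u * β a := by rw [hsuu, one_mul]
        _ = star u * (α a * u) := by rw [mul_assoc, ← h]
        _ = star u * α a * star (star u) := by rw [star_star, mul_assoc]
  · rintro ⟨u, hu, hβ⟩
    have h1 : star u * u = 1 := hu.1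
    have h2 : u * star u = 1 := hu.2
    refine ⟨LinearEquiv.ofLinear (LinearMap.mulRight ℂ (star u)) (LinearMap.mulRight ℂ u)
      ?_ ?_, ?_, ?_, ?_⟩
    · ext x
      simp [mul_assoc, h2]
    · ext x
      simp [mul_assoc, h1]
    · intro a x
      simp [mul_assoc]
    · intro x a
      simp only [LinearEquiv.ofLinear_apply, LinearMap.mulRight_apply, hβ]
      calc x * α a * star u = x * (star u * u) * α a * star u := by rw [h1, mul_one]
        _ = x * star u * (u * α a * star u) := by noncomm_ring
    · intro x y
      simp only [LinearEquiv.ofLinear_apply, LinearMap.mulRight_apply, star_mul, star_star]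
      calc x * star u * (u * star y) = x * (star u * u) * star y := by noncomm_ring
        _ = x * star y := by rw [h1, mul_one]
end

section
/- In the setting of the extension lemma: for χ ∈ Ĝ, a function f ∈ C(H,A) lies in the isotypic component A'(χ) of α' if and only if f = χ_H ⊗ f(0) with f(0) ∈ A(χ_N), where χ_H(h) := χ(0,h) and χ_N(n) := χ(n,0); hence A'(χ) = χ_H ⊗ A(χ_N), the fixed point algebra of (A', G, α') is 1 ⊗ A^N ≅ A^N, and if (A, N, α) is free then (A', G, α') is free. -/
/-!
In `N ×_ω H` both `(n + ω (h', h), 0) · (0, h' + h)` and `(n, h) · (0, h')` equal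
`(n + ω (h', h), h' + h)` (as `ω` is normalized and symmetric), so a character satisfies
`χ (n, h) χ (0, h') = χ (0, h' + h) χ (n + ω (h', h), 0)`. Evaluating the eigenvector equation of
`α'` at `h' = 0` gives `f h = χ (0, h) • f 0` and `f 0 ∈ A(χ_N)`; conversely the character identity
makes every `h ↦ χ (0, h) • a` with `a ∈ A(χ_N)` an eigenvector. The fixed point algebra is the
case `χ = 1`.
-/

section TwistedCharacter

variable {N H 𝕜 : Type*} [AddCommMonoid N] [AddCommMonoid H] [CommMonoid 𝕜]
  {ω : H × H → N} {χ : N × H → 𝕜}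

theorem char_add_zero (hω0 : ω (0, 0) = 0)
    (hχmul : ∀ p q : N × H, χ (p.1 + q.1 + ω (p.2, q.2), p.2 + q.2) = χ p * χ q) (m n : N) :
    χ (m + n, 0) = χ (m, 0) * χ (n, 0) := by
  simpa only [hω0, add_zero] using hχmul (m, 0) (n, 0)

theorem char_mul_char_zero_left (hω0 : ∀ h, ω (0, h) = 0)
    (hωsymm : ∀ h₁ h₂ : H, ω (h₁, h₂) = ω (h₂, h₁))
    (hχmul : ∀ p q : N × H, χ (p.1 + q.1 + ω (p.2, q.2), p.2 + q.2) = χ p * χ q)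
    (n : N) (h h' : H) :
    χ (n, h) * χ (0, h') = χ (0, h' + h) * χ (n + ω (h', h), 0) := by
  have hsplit := hχmul (n + ω (h', h), 0) (0, h' + h)
  have hprod := hχmul (n, h) (0, h')
  simp only [hω0, add_zero, zero_add] at hsplit hprod
  rw [hωsymm, add_comm h] at hprod
  rw [← hprod, hsplit, mul_comm]

end TwistedCharacter

section Isotypic

variable {N H 𝕜 M F : Type*} [AddCommMonoid N] [AddCommMonoid H] [CommMonoid 𝕜] [MulAction 𝕜 M]
  [FunLike F M M] [MulActionHomClass F 𝕜 M M]

def isotypic (α : N → F) (ρ : N → 𝕜) : Set M :=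
  {a | ∀ n, α n a = ρ n • a}

/-- The `χ`-isotypic component of the action `α'_{(n,h)} f (h') = α_{n + ω(h',h)} (f (h' + h))`
of `N ×_ω H` on functions `H → M`. -/
def twistedIsotypic (ω : H × H → N) (α : N → F) (χ : N × H → 𝕜) : Set (H → M) :=
  {f | ∀ n h h', α (n + ω (h', h)) (f (h' + h)) = χ (n, h) • f h'}

variable {ω : H × H → N} {α : N → F} {χ : N × H → 𝕜}

theorem smul_mem_twistedIsotypic (hω0 : ∀ h, ω (0, h) = 0)
    (hωsymm : ∀ h₁ h₂ : H, ω (h₁, h₂) = ω (h₂, h₁))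
    (hχmul : ∀ p q : N × H, χ (p.1 + q.1 + ω (p.2, q.2), p.2 + q.2) = χ p * χ q)
    {a : M} (ha : a ∈ isotypic α fun n => χ (n, 0)) :
    (fun h => χ (0, h) • a) ∈ twistedIsotypic ω α χ := by
  intro n h h'
  rw [map_smul, ha, smul_smul, ← char_mul_char_zero_left hω0 hωsymm hχmul, smul_smul]

theorem mem_twistedIsotypic_iff (hα0 : ∀ a, α 0 a = a) (hω0 : ∀ h, ω (0, h) = 0)
    (hωsymm : ∀ h₁ h₂ : H, ω (h₁, h₂) = ω (h₂, h₁))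
    (hχmul : ∀ p q : N × H, χ (p.1 + q.1 + ω (p.2, q.2), p.2 + q.2) = χ p * χ q)
    {f : H → M} :
    f ∈ twistedIsotypic ω α χ ↔
      (∀ h, f h = χ (0, h) • f 0) ∧ f 0 ∈ isotypic α fun n => χ (n, 0) := by
  constructor
  · intro hf
    refine ⟨fun h => ?_, fun n => ?_⟩
    · simpa only [hω0, add_zero, zero_add, hα0] using hf 0 h 0
    · simpa only [hω0, add_zero] using hf n 0 0
  · rintro ⟨hfH, hfN⟩
    rw [show f = fun h => χ (0, h) • f 0 from funext hfH]
    exact smul_mem_twistedIsotypic hω0 hωsymm hχmul hfN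

end Isotypic

theorem stmt15_general {A : Type*} [NormedRing A] [StarRing A]
    [NormedAlgebra ℂ A]
    {N : Type*} [AddCommGroup N] [TopologicalSpace N]
    {H : Type*} [AddCommGroup H] [TopologicalSpace H]
    (ω : H × H → N)
    (hωsymm : ∀ h₁ h₂ : H, ω (h₁, h₂) = ω (h₂, h₁))
    (hωnorm : ∀ h : H, ω (0, h) = 0 ∧ ω (h, 0) = 0)
    (α : N → (A ≃⋆ₐ[ℂ] A))
    (hα0 : ∀ a : A, α 0 a = a)
    -- a character `χ` of the central extension `G = N ×_ω H`
    (χ : N × H → ℂ) (hχcont : Continuous χ) (hχnorm : ∀ p, ‖χ p‖ = 1)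
    (hχmul : ∀ p q : N × H,
      χ (p.1 + q.1 + ω (p.2, q.2), p.2 + q.2) = χ p * χ q) :
    -- (1) `A'(χ) = χ_H ⊗ A(χ_N)`
    (∀ f : H → A, Continuous f →
      ((∀ (n : N) (h h' : H), α (n + ω (h', h)) (f (h' + h)) = χ (n, h) • f h') ↔
        ((∀ h : H, f h = χ (0, h) • f 0) ∧ (∀ n : N, α n (f 0) = χ (n, 0) • f 0)))) ∧
    -- (2) the fixed point algebra is `1 ⊗ A^N ≅ A^N`
    (∀ f : H → A, Continuous f →
      ((∀ (n : N) (h h' : H), α (n + ω (h', h)) (f (h' + h)) = f h') ↔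
        ((∀ h : H, f h = f 0) ∧ (∀ n : N, α n (f 0) = f 0)))) ∧
    -- (3) freeness passes from `(A, N, α)` to `(A', G, α')`
    ((∀ ρ : N → ℂ, Continuous ρ → (∀ m, ‖ρ m‖ = 1) →
        (∀ m n : N, ρ (m + n) = ρ m * ρ n) →
        ∃ a : A, a ≠ 0 ∧ ∀ m : N, α m a = ρ m • a) →
      ∃ f : H → A, Continuous f ∧ f ≠ 0 ∧
        ∀ (n : N) (h h' : H), α (n + ω (h', h)) (f (h' + h)) = χ (n, h) • f h') := by
  have hω0 (h : H) : ω (0, h) = 0 := (hωnorm h).1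
  have hone_mul (_ _ : N × H) : (1 : ℂ) = 1 * 1 := (mul_one 1).symm
  refine ⟨fun f _ => mem_twistedIsotypic_iff hα0 hω0 hωsymm hχmul, fun f _ => ?_, ?_⟩
  · simpa only [twistedIsotypic, isotypic, Set.mem_ofPred_eq, one_smul] using
      mem_twistedIsotypic_iff (f := f) (χ := fun _ => (1 : ℂ)) hα0 hω0 hωsymm hone_mul
  · intro hfree
    obtain ⟨a, ha, haχ⟩ := hfree (fun n => χ (n, 0))
      (hχcont.comp (continuous_id.prodMk continuous_const)) (fun m => hχnorm (m, 0))
      (char_add_zero (hω0 0) hχmul)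
    have hχ0 : χ (0, 0) ≠ 0 := norm_ne_zero_iff.mp (by rw [hχnorm]; exact one_ne_zero)
    refine ⟨fun h => χ (0, h) • a,
      (hχcont.comp (continuous_const.prodMk continuous_id)).smul continuous_const,
      fun hf => smul_ne_zero hχ0 ha (congrFun hf 0),
      smul_mem_twistedIsotypic hω0 hωsymm hχmul haχ⟩

/-- Lemma `lem:cocycle`, second part: for the twisted action
`(α'_{(n,h)} f)(h') = α_{n+ω(h',h)}(f(h'+h))` of `G = N ×_ω H` on `C(H,A)` and a character `χ`
of `G`, a continuous `f : H → A` lies in the isotypic component `A'(χ)` iff `f = χ_H ⊗ f(0)`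
with `f(0) ∈ A(χ_N)`; the fixed point algebra is `1 ⊗ A^N ≅ A^N`; and if `(A, N, α)` is free
then so is `(A', G, α')` (freeness witnessed by unitals/nonvanishing of isotypic components). -/
theorem stmt15 {A : Type*} [NormedRing A] [StarRing A] [CStarRing A] [CompleteSpace A]
    [NormedAlgebra ℂ A] [StarModule ℂ A]
    {N : Type*} [AddCommGroup N] [TopologicalSpace N] [IsTopologicalAddGroup N] [CompactSpace N]
    {H : Type*} [AddCommGroup H] [TopologicalSpace H] [IsTopologicalAddGroup H] [CompactSpace H]
    (ω : H × H → N) (hωcont : Continuous ω)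
    (hωsymm : ∀ h₁ h₂ : H, ω (h₁, h₂) = ω (h₂, h₁))
    (hωnorm : ∀ h : H, ω (0, h) = 0 ∧ ω (h, 0) = 0)
    (hωcoc : ∀ h₁ h₂ h₃ : H,
      ω (h₁, h₂) + ω (h₁ + h₂, h₃) = ω (h₂, h₃) + ω (h₁, h₂ + h₃))
    (α : N → (A ≃⋆ₐ[ℂ] A))
    (hα0 : ∀ a : A, α 0 a = a)
    (hαadd : ∀ (m n : N) (a : A), α (m + n) a = α m (α n a))
    (hαcont : ∀ a : A, Continuous fun n => α n a)
    -- a character `χ` of the central extension `G = N ×_ω H`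
    (χ : N × H → ℂ) (hχcont : Continuous χ) (hχnorm : ∀ p, ‖χ p‖ = 1)
    (hχmul : ∀ p q : N × H,
      χ (p.1 + q.1 + ω (p.2, q.2), p.2 + q.2) = χ p * χ q) :
    -- (1) `A'(χ) = χ_H ⊗ A(χ_N)`
    (∀ f : H → A, Continuous f →
      ((∀ (n : N) (h h' : H), α (n + ω (h', h)) (f (h' + h)) = χ (n, h) • f h') ↔
        ((∀ h : H, f h = χ (0, h) • f 0) ∧ (∀ n : N, α n (f 0) = χ (n, 0) • f 0)))) ∧
    -- (2) the fixed point algebra is `1 ⊗ A^N ≅ A^N`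
    (∀ f : H → A, Continuous f →
      ((∀ (n : N) (h h' : H), α (n + ω (h', h)) (f (h' + h)) = f h') ↔
        ((∀ h : H, f h = f 0) ∧ (∀ n : N, α n (f 0) = f 0)))) ∧
    -- (3) freeness passes from `(A, N, α)` to `(A', G, α')`
    ((∀ ρ : N → ℂ, Continuous ρ → (∀ m, ‖ρ m‖ = 1) →
        (∀ m n : N, ρ (m + n) = ρ m * ρ n) →
        ∃ a : A, a ≠ 0 ∧ ∀ m : N, α m a = ρ m • a) →
      ∃ f : H → A, Continuous f ∧ f ≠ 0 ∧
        ∀ (n : N) (h h' : H), α (n + ω (h', h)) (f (h' + h)) = χ (n, h) • f h') :=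
  stmt15_general ω hωsymm hωnorm α hα0 χ hχcont hχnorm hχmul
end
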